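/- arXiv:2404.16628 — 2 statements merged into one kernel-verified Lean document; each statement's English description precedes it below -/
import Mathlib

section
/- Let q : (G,𝒫) → (H,𝒬) be an (L,C,M)-quasi-isometry of group pairs. Then there exist constants L' ≥ 1, C' ≥ 0, N ∈ ℕ and a map q̇ : G/𝒫 → H/𝒬 such that: (i) Hdist_H(q̇(A), q(A)) ≤ M for every A ∈ G/𝒫; (ii) for all A₁, A₂ ∈ G/𝒫, Hdist_G(A₁,A₂) < ∞ if and only if Hdist_H(q̇(A₁), q̇(A₂)) < ∞, and in that case (1/L')·Hdist_G(A₁,A₂) − C' ≤ Hdist_H(q̇(A₁), q̇(A₂)) ≤ L'·Hdist_G(A₁,A₂) + C'; (iii) every B ∈ H/𝒬 satisfies Hdist_H(q̇(A), B) ≤ C' for some A ∈ G/𝒫; and (iv) every fiber of q̇ has cardinality at most N. -/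
/-!
Send each coset `A` to a coset `q̇ A` within Hausdorff distance `M` of `q A`. A quasi-isometry
distorts the Hausdorff distance of subsets by the same affine bounds as the distance of points,
and replacing two sets by sets at Hausdorff distance `≤ M` changes their distance by at most `2M`;
this gives (ii), and (iii) follows from the backward coset condition. All cosets in a fibre of `q̇`
lie within a uniform Hausdorff distance `R` of each other. A coset at distance `≤ R` from `g₀P₀`
contains a point `a` with `|a⁻¹g₀| ≤ R + 1`, so it equals `(g₀h⁻¹)P` with `|h| ≤ R + 1` and
`P ∈ 𝒫`; as balls of the word metric are finite, this bounds the fibres uniformly.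
-/

open scoped Pointwise ENNReal NNReal

namespace CIC

variable {G : Type*} [Group G] {H : Type*} [Group H]

/-- Word length of `g` with respect to the generating set `S`: the least `n` such that `g`
is a product of `n` elements of `S ∪ S⁻¹`. -/
noncomputable def wordLength (S : Set G) (g : G) : ℕ :=
  sInf {n | ∃ l : List G, (∀ x ∈ l, x ∈ S ∨ x⁻¹ ∈ S) ∧ l.length = n ∧ l.prod = g}

/-- The word metric on `G` associated to the generating set `S`. -/
noncomputable def wdist (S : Set G) (g h : G) : ℕ := wordLength S (g⁻¹ * h)

/-- Closed `r`-neighborhood of `A` with respect to the word metric of `S`. -/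
def nbhd (S : Set G) (r : ℝ) (A : Set G) : Set G :=
  {x | ∃ a ∈ A, (wdist S a x : ℝ) ≤ r}

/-- Hausdorff distance between subsets of `G`, valued in `[0,∞]`: the infimum of those
`r ≥ 0` such that each set is contained in the closed `r`-neighborhood of the other,
the infimum of the empty set being `∞`. -/
noncomputable def hdist (S : Set G) (A B : Set G) : ℝ≥0∞ :=
  ⨅ (r : ℝ≥0) (_ : A ⊆ nbhd S (r : ℝ) B ∧ B ⊆ nbhd S (r : ℝ) A), (r : ℝ≥0∞)

/-- The conjugate subgroup `g P g⁻¹`. -/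
def conj (g : G) (P : Subgroup G) : Subgroup G := P.map (MulAut.conj g).toMonoidHom

/-- The set `G/𝒫` of all left cosets `gP` with `g ∈ G` and `P ∈ 𝒫`. -/
def cosets (Ps : Finset (Subgroup G)) : Set (Set G) :=
  {A | ∃ (g : G) (P : Subgroup G), P ∈ Ps ∧ A = g • (P : Set G)}

/-- A group pair `(G, 𝒫)`: `S` is a finite generating set of `G` and `𝒫` is a finite
collection of infinite subgroups of `G`. -/
structure IsGroupPair (S : Finset G) (Ps : Finset (Subgroup G)) : Prop where
  generates : Subgroup.closure (S : Set G) = ⊤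
  infinite : ∀ P ∈ Ps, (P : Set G).Infinite

/-- An `(L,C,M)`-quasi-isometry of group pairs `q : (G,𝒫) → (H,𝒬)`. -/
structure IsPairQI (S : Finset G) (T : Finset H)
    (Ps : Finset (Subgroup G)) (Qs : Finset (Subgroup H))
    (L C M : ℝ≥0) (q : G → H) : Prop where
  one_le : 1 ≤ L
  lower : ∀ a b : G, (wdist (S : Set G) a b : ℝ) / L - C ≤ (wdist (T : Set H) (q a) (q b) : ℝ)
  upper : ∀ a b : G, (wdist (T : Set H) (q a) (q b) : ℝ) ≤ L * (wdist (S : Set G) a b : ℝ) + C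
  dense : ∀ y : H, ∃ x : G, (wdist (T : Set H) (q x) y : ℝ) ≤ C
  coset_fwd : ∀ A ∈ cosets Ps, ∃ B ∈ cosets Qs, hdist (T : Set H) (q '' A) B < (M : ℝ≥0∞)
  coset_bwd : ∀ B ∈ cosets Qs, ∃ A ∈ cosets Ps, hdist (T : Set H) (q '' A) B < (M : ℝ≥0∞)

section WordMetric

variable {S : Set G}

lemma wordLength_le_length {g : G} {l : List G} (hl : ∀ x ∈ l, x ∈ S ∨ x⁻¹ ∈ S)
    (hprod : l.prod = g) : wordLength S g ≤ l.length :=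
  Nat.sInf_le ⟨l, hl, rfl, hprod⟩

lemma exists_list_length_eq_wordLength (hS : Subgroup.closure S = ⊤) (g : G) :
    ∃ l : List G, (∀ x ∈ l, x ∈ S ∨ x⁻¹ ∈ S) ∧ l.length = wordLength S g ∧ l.prod = g := by
  suffices {n | ∃ l : List G, (∀ x ∈ l, x ∈ S ∨ x⁻¹ ∈ S) ∧ l.length = n ∧ l.prod = g}.Nonempty
    from Nat.sInf_mem this
  have hg : g ∈ Submonoid.closure (S ∪ S⁻¹) := by
    rw [← Subgroup.closure_toSubmonoid, hS]
    trivial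
  obtain ⟨l, hl, hprod⟩ := Submonoid.exists_list_of_mem_closure hg
  exact ⟨l.length, l, fun x hx => (hl x hx).imp id Set.mem_inv.mp, rfl, hprod⟩

lemma wordLength_one : wordLength S (1 : G) = 0 :=
  Nat.le_zero.mp (wordLength_le_length (l := []) (by simp) rfl)

lemma wordLength_mul_le (hS : Subgroup.closure S = ⊤) (a b : G) :
    wordLength S (a * b) ≤ wordLength S a + wordLength S b := by
  obtain ⟨la, hla, hlena, rfl⟩ := exists_list_length_eq_wordLength hS a
  obtain ⟨lb, hlb, hlenb, rfl⟩ := exists_list_length_eq_wordLength hS b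
  rw [← hlena, ← hlenb, ← List.length_append, ← List.prod_append]
  exact wordLength_le_length (fun x hx => (List.mem_append.mp hx).elim (hla x) (hlb x)) rfl

lemma wdist_self (a : G) : wdist S a a = 0 := by
  simp [wdist, wordLength_one]

lemma wdist_triangle (hS : Subgroup.closure S = ⊤) (a b c : G) :
    wdist S a c ≤ wdist S a b + wdist S b c := by
  simpa [wdist, mul_assoc] using wordLength_mul_le hS (a⁻¹ * b) (b⁻¹ * c)

lemma finite_setOf_wordLength_le (hS : S.Finite) (hgen : Subgroup.closure S = ⊤) (n : ℕ) :
    {g : G | wordLength S g ≤ n}.Finite := by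
  have : Finite ↥(S ∪ S⁻¹) := (hS.union hS.inv).to_subtype
  refine ((List.finite_length_le ↥(S ∪ S⁻¹) n).image fun l => (l.map Subtype.val).prod).subset ?_
  intro g hg
  obtain ⟨l, hl, hlen, rfl⟩ := exists_list_length_eq_wordLength hgen g
  have hl' : ∀ x ∈ l, x ∈ S ∪ S⁻¹ := fun x hx => (hl x hx).imp id Set.mem_inv.mpr
  refine ⟨l.pmap Subtype.mk hl', ?_, ?_⟩
  · rwa [Set.mem_ofPred_eq, List.length_pmap, hlen]
  · simp only [List.map_pmap]
    simp

end WordMetric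

section Hausdorff

variable {S : Set G} {T : Set H}

lemma hdist_comm (A B : Set G) : hdist S A B = hdist S B A := by
  unfold hdist
  exact iInf_congr fun r => iInf_congr_Prop and_comm fun _ => rfl

lemma hdist_le {A B : Set G} {r : ℝ≥0} (hAB : A ⊆ nbhd S r B) (hBA : B ⊆ nbhd S r A) :
    hdist S A B ≤ r :=
  iInf₂_le r ⟨hAB, hBA⟩

lemma hdist_self (A : Set G) : hdist S A A = 0 := by
  refine nonpos_iff_eq_zero.mp ((hdist_le (r := 0) ?_ ?_).trans_eq ENNReal.coe_zero) <;>
    exact fun a ha => ⟨a, ha, by simp [wdist_self]⟩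

lemma nbhd_trans (hS : Subgroup.closure S = ⊤) {A B C : Set G} {r s : ℝ}
    (hAB : A ⊆ nbhd S r B) (hBC : B ⊆ nbhd S s C) : A ⊆ nbhd S (r + s) C := by
  intro a ha
  obtain ⟨b, hb, hba⟩ := hAB ha
  obtain ⟨c, hc, hcb⟩ := hBC hb
  refine ⟨c, hc, ?_⟩
  have : (wdist S c a : ℝ) ≤ wdist S c b + wdist S b a := by
    exact_mod_cast wdist_triangle hS c b a
  linarith

lemma hdist_triangle (hS : Subgroup.closure S = ⊤) (A B C : Set G) :
    hdist S A C ≤ hdist S A B + hdist S B C := by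
  simp only [hdist, ENNReal.iInf_add, ENNReal.add_iInf]
  refine le_iInf₂ fun s hs => le_iInf₂ fun r hr => ?_
  refine (hdist_le (r := r + s) (nbhd_trans hS hr.1 hs.1) ?_).trans_eq (ENNReal.coe_add r s)
  simpa [add_comm] using nbhd_trans hS hs.2 hr.2

lemma hdist_le_hdist_add_two_mul (hS : Subgroup.closure S = ⊤)
    {A₁ A₂ B₁ B₂ : Set G} {m : ℝ≥0∞} (h₁ : hdist S A₁ B₁ ≤ m) (h₂ : hdist S A₂ B₂ ≤ m) :
    hdist S B₁ B₂ ≤ hdist S A₁ A₂ + 2 * m :=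
  calc hdist S B₁ B₂ ≤ hdist S B₁ A₁ + (hdist S A₁ A₂ + hdist S A₂ B₂) :=
        (hdist_triangle hS _ _ _).trans (add_le_add_right (hdist_triangle hS _ _ _) _)
    _ ≤ m + (hdist S A₁ A₂ + m) := by rw [hdist_comm]; gcongr
    _ = hdist S A₁ A₂ + 2 * m := by ring

lemma hdist_le_mul_add {A B : Set G} {A' B' : Set H} {K c : ℝ≥0} (hK : K ≠ 0)
    (h : ∀ r : ℝ≥0, A ⊆ nbhd S r B ∧ B ⊆ nbhd S r A →
      A' ⊆ nbhd T (K * r + c : ℝ≥0) B' ∧ B' ⊆ nbhd T (K * r + c : ℝ≥0) A') :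
    hdist T A' B' ≤ K * hdist S A B + c := by
  simp only [hdist, ENNReal.mul_iInf_of_ne (ENNReal.coe_ne_zero.mpr hK) ENNReal.coe_ne_top,
    ENNReal.iInf_add]
  refine le_iInf₂ fun r hr => ?_
  obtain ⟨h1, h2⟩ := h r hr
  exact (iInf₂_le _ ⟨h1, h2⟩).trans_eq (by push_cast; rfl)

end Hausdorff

section QuasiIsometry

variable {S : Set G} {T : Set H} {L C : ℝ≥0} {q : G → H}

lemma image_subset_nbhd_image
    (hup : ∀ a b : G, (wdist T (q a) (q b) : ℝ) ≤ L * (wdist S a b : ℝ) + C)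
    {A B : Set G} {r : ℝ≥0} (hAB : A ⊆ nbhd S r B) :
    q '' A ⊆ nbhd T (L * r + C : ℝ≥0) (q '' B) := by
  rintro _ ⟨a, ha, rfl⟩
  obtain ⟨b, hb, hba⟩ := hAB ha
  refine ⟨q b, Set.mem_image_of_mem q hb, ?_⟩
  have := mul_le_mul_of_nonneg_left hba L.coe_nonneg
  push_cast
  linarith [hup b a]

lemma subset_nbhd_of_image_subset_nbhd (hL : 0 < L)
    (hlo : ∀ a b : G, (wdist S a b : ℝ) / L - C ≤ (wdist T (q a) (q b) : ℝ))
    {A B : Set G} {r : ℝ≥0} (hAB : q '' A ⊆ nbhd T r (q '' B)) :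
    A ⊆ nbhd S (L * r + L * C : ℝ≥0) B := by
  intro a ha
  obtain ⟨_, ⟨b, hb, rfl⟩, hba⟩ := hAB ⟨a, ha, rfl⟩
  refine ⟨b, hb, ?_⟩
  have := (div_le_iff₀' (NNReal.coe_pos.mpr hL)).mp (show (wdist S b a : ℝ) / L ≤ r + C by
    linarith [hlo b a])
  push_cast
  linarith

lemma hdist_image_le (hL : 0 < L)
    (hup : ∀ a b : G, (wdist T (q a) (q b) : ℝ) ≤ L * (wdist S a b : ℝ) + C) (A B : Set G) :
    hdist T (q '' A) (q '' B) ≤ L * hdist S A B + C :=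
  hdist_le_mul_add hL.ne' fun _ hr =>
    ⟨image_subset_nbhd_image hup hr.1, image_subset_nbhd_image hup hr.2⟩

lemma hdist_le_image (hL : 0 < L)
    (hlo : ∀ a b : G, (wdist S a b : ℝ) / L - C ≤ (wdist T (q a) (q b) : ℝ)) (A B : Set G) :
    hdist S A B ≤ L * hdist T (q '' A) (q '' B) + (L * C : ℝ≥0) :=
  hdist_le_mul_add hL.ne' fun _ hr =>
    ⟨subset_nbhd_of_image_subset_nbhd hL hlo hr.1, subset_nbhd_of_image_subset_nbhd hL hlo hr.2⟩

end QuasiIsometry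

section Cosets

variable {S : Set G}

lemma nonempty_of_mem_cosets {Ps : Finset (Subgroup G)} {A : Set G} (hA : A ∈ cosets Ps) :
    A.Nonempty := by
  obtain ⟨g, P, -, rfl⟩ := hA
  exact ⟨g, 1, P.one_mem, mul_one g⟩

lemma cosets_near_subset_image (Ps : Finset (Subgroup G)) (g : G) (n : ℕ) :
    {A | A ∈ cosets Ps ∧ ∃ a ∈ A, wordLength S (a⁻¹ * g) ≤ n} ⊆
      (fun p : G × Subgroup G => (g * p.1⁻¹) • (p.2 : Set G)) ''
        ({h | wordLength S h ≤ n} ×ˢ (Ps : Set (Subgroup G))) := by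
  rintro _ ⟨⟨x, P, hP, rfl⟩, a, ⟨p, hp, rfl⟩, ha⟩
  refine ⟨((x * p)⁻¹ * g, P), ⟨ha, hP⟩, ?_⟩
  simp only [mul_inv_rev, inv_inv, mul_inv_cancel_left]
  rw [mul_smul, smul_coe_set hp]

lemma exists_encard_cosets_hdist_le (hS : S.Finite) (hgen : Subgroup.closure S = ⊤)
    (Ps : Finset (Subgroup G)) (R : ℝ≥0) :
    ∃ N : ℕ, ∀ A₀ ∈ cosets Ps, {A | A ∈ cosets Ps ∧ hdist S A₀ A ≤ R}.encard ≤ N := by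
  classical
  set n := ⌈(R : ℝ)⌉₊ + 1
  have hball := finite_setOf_wordLength_le hS hgen n
  refine ⟨(hball.toFinset ×ˢ Ps).card, fun A₀ hA₀ => ?_⟩
  obtain ⟨g, hg⟩ := nonempty_of_mem_cosets hA₀
  have hnear : {A | A ∈ cosets Ps ∧ hdist S A₀ A ≤ R} ⊆
      {A | A ∈ cosets Ps ∧ ∃ a ∈ A, wordLength S (a⁻¹ * g) ≤ n} := by
    rintro A ⟨hA, hR⟩
    obtain ⟨r, ⟨hA₀A, -⟩, hr⟩ : ∃ r : ℝ≥0,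
        (A₀ ⊆ nbhd S r A ∧ A ⊆ nbhd S r A₀) ∧ (r : ℝ≥0∞) < R + 1 := by
      simpa [hdist, iInf_lt_iff] using
        hR.trans_lt (ENNReal.lt_add_right ENNReal.coe_ne_top one_ne_zero)
    obtain ⟨a, ha, hga⟩ := hA₀A hg
    refine ⟨hA, a, ha, (Nat.cast_le (α := ℝ)).mp ?_⟩
    have : (r : ℝ) < R + 1 := by exact_mod_cast hr
    have := Nat.le_ceil (R : ℝ)
    push_cast [n]
    exact (show (wdist S a g : ℝ) ≤ r from hga).trans (by linarith)
  calc _ ≤ _ := Set.encard_mono (hnear.trans (cosets_near_subset_image Ps g n))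
    _ ≤ _ := Set.encard_image_le _ _
    _ = _ := by
      rw [← Set.encard_coe_eq_coe_finsetCard]
      simp

end Cosets

lemma toReal_bounds_of_le_mul_add {d e : ℝ≥0∞} {L c : ℝ≥0} (hL : 1 ≤ L)
    (hed : e ≤ L * d + c) (hde : d ≤ L * e + c) :
    (d < ⊤ ↔ e < ⊤) ∧
      (d < ⊤ → d.toReal / L - c ≤ e.toReal ∧ e.toReal ≤ L * d.toReal + c) := by
  have hd : d < ⊤ → e < ⊤ := fun hd => hed.trans_lt (by finiteness)
  refine ⟨⟨hd, fun he => hde.trans_lt (by finiteness)⟩, fun hd' => ?_⟩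
  lift d to ℝ≥0 using hd'.ne
  lift e to ℝ≥0 using (hd hd').ne
  norm_cast at hed hde
  simp only [ENNReal.coe_toReal]
  have hde' : (d : ℝ) ≤ L * (e + c) := by
    have : (c : ℝ) ≤ L * c := le_mul_of_one_le_left c.coe_nonneg (by exact_mod_cast hL)
    have : (d : ℝ) ≤ L * e + c := by exact_mod_cast hde
    linarith
  refine ⟨?_, by exact_mod_cast hed⟩
  rw [sub_le_iff_le_add, div_le_iff₀ (by positivity)]
  linarith

section PairQI

variable {S : Finset G} {T : Finset H} {Ps : Finset (Subgroup G)} {Qs : Finset (Subgroup H)}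
  {L C M : ℝ≥0} {q : G → H}

lemma hdist_near_images_le (hT : Subgroup.closure (T : Set H) = ⊤)
    (hq : IsPairQI S T Ps Qs L C M q) {A₁ A₂ : Set G} {B₁ B₂ : Set H}
    (h₁ : hdist (T : Set H) (q '' A₁) B₁ ≤ M) (h₂ : hdist (T : Set H) (q '' A₂) B₂ ≤ M) :
    hdist (T : Set H) B₁ B₂ ≤ L * hdist (S : Set G) A₁ A₂ + (L * (C + 2 * M) : ℝ≥0) := by
  have hL : 0 < L := zero_lt_one.trans_le hq.one_le
  calc hdist (T : Set H) B₁ B₂ ≤ hdist (T : Set H) (q '' A₁) (q '' A₂) + 2 * M :=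
        hdist_le_hdist_add_two_mul hT h₁ h₂
    _ ≤ L * hdist (S : Set G) A₁ A₂ + (C + 2 * M : ℝ≥0) := by
        grw [hdist_image_le hL hq.upper]
        exact le_of_eq (by push_cast; ring)
    _ ≤ _ := by gcongr; exact le_mul_of_one_le_left zero_le hq.one_le

lemma hdist_le_hdist_near_images (hT : Subgroup.closure (T : Set H) = ⊤)
    (hq : IsPairQI S T Ps Qs L C M q) {A₁ A₂ : Set G} {B₁ B₂ : Set H}
    (h₁ : hdist (T : Set H) (q '' A₁) B₁ ≤ M) (h₂ : hdist (T : Set H) (q '' A₂) B₂ ≤ M) :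
    hdist (S : Set G) A₁ A₂ ≤ L * hdist (T : Set H) B₁ B₂ + (L * (C + 2 * M) : ℝ≥0) := by
  have hL : 0 < L := zero_lt_one.trans_le hq.one_le
  rw [hdist_comm] at h₁ h₂
  calc hdist (S : Set G) A₁ A₂ ≤ L * hdist (T : Set H) (q '' A₁) (q '' A₂) + (L * C : ℝ≥0) :=
        hdist_le_image hL hq.lower A₁ A₂
    _ ≤ L * (hdist (T : Set H) B₁ B₂ + 2 * M) + (L * C : ℝ≥0) := by
        grw [hdist_le_hdist_add_two_mul hT h₁ h₂]
    _ = _ := by push_cast; ring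

end PairQI

/-- A quasi-isometry of group pairs induces a uniformly finite-to-one quasi-isometry
`q̇ : (G/𝒫, Hdist_G) → (H/𝒬, Hdist_H)` of the coset spaces, with `Hdist(q̇(A), q(A)) ≤ M`. -/
theorem statement5 (S : Finset G) (T : Finset H)
    (Ps : Finset (Subgroup G)) (Qs : Finset (Subgroup H))
    (hG : IsGroupPair S Ps) (hH : IsGroupPair T Qs)
    (L C M : ℝ≥0) (q : G → H) (hq : IsPairQI S T Ps Qs L C M q) :
    ∃ (L' C' : ℝ≥0) (N : ℕ) (qd : Set G → Set H),
      1 ≤ L' ∧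
      (∀ A ∈ cosets Ps, qd A ∈ cosets Qs) ∧
      -- (i)
      (∀ A ∈ cosets Ps, hdist (T : Set H) (qd A) (q '' A) ≤ (M : ℝ≥0∞)) ∧
      -- (ii)
      (∀ A₁ ∈ cosets Ps, ∀ A₂ ∈ cosets Ps,
        (hdist (S : Set G) A₁ A₂ < ⊤ ↔ hdist (T : Set H) (qd A₁) (qd A₂) < ⊤) ∧
        (hdist (S : Set G) A₁ A₂ < ⊤ →
          (hdist (S : Set G) A₁ A₂).toReal / L' - C' ≤
              (hdist (T : Set H) (qd A₁) (qd A₂)).toReal ∧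
            (hdist (T : Set H) (qd A₁) (qd A₂)).toReal ≤
              L' * (hdist (S : Set G) A₁ A₂).toReal + C')) ∧
      -- (iii)
      (∀ B ∈ cosets Qs, ∃ A ∈ cosets Ps, hdist (T : Set H) (qd A) B ≤ (C' : ℝ≥0∞)) ∧
      -- (iv)
      (∀ B : Set H, {A | A ∈ cosets Ps ∧ qd A = B}.encard ≤ N) := by
  choose! qd hqd_mem hqd_lt using hq.coset_fwd
  have hqd : ∀ A ∈ cosets Ps, hdist (T : Set H) (q '' A) (qd A) ≤ M :=
    fun A hA => (hqd_lt A hA).le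
  set K := L * (C + 2 * M)
  obtain ⟨N, hN⟩ := exists_encard_cosets_hdist_le S.finite_toSet hG.generates Ps K
  refine ⟨L, K, N, qd, hq.one_le, hqd_mem,
    fun A hA => hdist_comm (S := (T : Set H)) .. ▸ hqd A hA, fun A₁ hA₁ A₂ hA₂ => ?_,
    fun B hB => ?_, fun B => ?_⟩
  · exact toReal_bounds_of_le_mul_add hq.one_le
      (hdist_near_images_le hH.generates hq (hqd A₁ hA₁) (hqd A₂ hA₂))
      (hdist_le_hdist_near_images hH.generates hq (hqd A₁ hA₁) (hqd A₂ hA₂))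
  · obtain ⟨A, hA, hAB⟩ := hq.coset_bwd B hB
    refine ⟨A, hA, ?_⟩
    calc hdist (T : Set H) (qd A) B ≤ hdist (T : Set H) (q '' A) (q '' A) + 2 * M :=
          hdist_le_hdist_add_two_mul hH.generates (hqd A hA) hAB.le
      _ ≤ K := by
          rw [hdist_self, zero_add]
          exact_mod_cast le_add_self.trans (le_mul_of_one_le_left zero_le hq.one_le)
  · rcases Set.eq_empty_or_nonempty {A | A ∈ cosets Ps ∧ qd A = B} with h | ⟨A₀, hA₀, rfl⟩
    · simp [h]
    refine (Set.encard_mono ?_).trans (hN A₀ hA₀)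
    rintro A ⟨hA, hAA₀⟩
    refine ⟨hA, ?_⟩
    simpa [← hAA₀, hdist_self, K] using
      hdist_le_hdist_near_images hH.generates hq (hqd A₀ hA₀) (hqd A hA)

end CIC
end

section
/- Let G be a group with a fixed finite generating set and associated word metric d_G, and let g₁P₁, …, g_kP_k be arbitrary left cosets of subgroups of G. For every r > 0 there exists R > 0 such that ⋂_{i=1}^k N_r(g_iP_i) ⊆ N_R(⋂_{i=1}^k g_iP_ig_i⁻¹). -/
open scoped Pointwise ENNReal NNReal

namespace CIC

variable {G : Type*} [Group G] {H : Type*} [Group H]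

/-!
A point `x` of `⋂ᵢ N_r(gᵢPᵢ)` can be written as `x = aᵢ sᵢ` with `aᵢ ∈ gᵢPᵢ` and `|sᵢ| ≤ r`, so
`x` lies in `Y(s) = ⋂ᵢ gᵢPᵢsᵢ` for a `k`-tuple `s` of elements of the `r`-ball, of which there
are finitely many since `S` is a finite generating set. Two points of the same `Y(s)` differ on the left by an element of
`⋂ᵢ gᵢPᵢgᵢ⁻¹`, because `(gᵢpsᵢ)(gᵢqsᵢ)⁻¹ = gᵢpq⁻¹gᵢ⁻¹`. Hence each `Y(s)` lies in a single right
coset `(⋂ᵢ gᵢPᵢgᵢ⁻¹) z_s`, and `R` can be taken to be the largest word length of the finitely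
many `z_s`.
-/

lemma exists_geodesic_word {S : Set G} (hS : Subgroup.closure S = ⊤) (x : G) :
    ∃ l : List G, (∀ y ∈ l, y ∈ S ∨ y⁻¹ ∈ S) ∧ l.length = wordLength S x ∧ l.prod = x := by
  have hx : x ∈ Submonoid.closure (S ∪ S⁻¹) := by
    rw [← Subgroup.closure_toSubmonoid, hS]
    trivial
  obtain ⟨l, hlS, rfl⟩ := Submonoid.exists_list_of_mem_closure hx
  have hne : {n | ∃ l' : List G, (∀ y ∈ l', y ∈ S ∨ y⁻¹ ∈ S) ∧ l'.length = n ∧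
      l'.prod = l.prod}.Nonempty := ⟨l.length, l, hlS, rfl, rfl⟩
  exact Nat.sInf_mem hne

lemma list_prod_mem_pow {M : Type*} [Monoid M] {X : Set M} {l : List M} (hl : ∀ y ∈ l, y ∈ X) :
    l.prod ∈ X ^ l.length := by
  induction l with
  | nil => exact Set.one_mem_one
  | cons a l ih =>
    rw [List.prod_cons, List.length_cons, pow_succ']
    exact Set.mul_mem_mul (hl a List.mem_cons_self) (ih fun y hy => hl y (List.mem_cons_of_mem a hy))

lemma finite_setOf_wordLength_le_s8 {S : Finset G} (hS : Subgroup.closure (S : Set G) = ⊤) (r : ℝ) :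
    {x | (wordLength (S : Set G) x : ℝ) ≤ r}.Finite := by
  classical
  obtain ⟨n, hn⟩ := exists_nat_ge r
  refine ((Finset.range (n + 1)).finite_toSet.biUnion
    fun m _ => ((S ∪ S⁻¹) ^ m).finite_toSet).subset fun x hx => ?_
  obtain ⟨l, hlS, hlen, rfl⟩ := exists_geodesic_word hS x
  refine Set.mem_biUnion (x := l.length) ?_ ?_
  · rw [Finset.coe_range, Set.mem_Iio, Nat.lt_succ_iff, hlen]
    exact_mod_cast le_trans hx hn
  · rw [Finset.coe_pow, Finset.coe_union, Finset.coe_inv]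
    exact list_prod_mem_pow hlS

lemma mem_nbhd_iff {S : Set G} {r : ℝ} {A : Set G} {x : G} :
    x ∈ nbhd S r A ↔ ∃ s, (wordLength S s : ℝ) ≤ r ∧ x * s⁻¹ ∈ A := by
  constructor
  · rintro ⟨a, ha, hax⟩
    exact ⟨a⁻¹ * x, hax, by simpa using ha⟩
  · rintro ⟨s, hs, hxs⟩
    exact ⟨x * s⁻¹, hxs, by simpa [wdist] using hs⟩

lemma exists_mul_subset_nbhd (S : Set G) (A : Set G) {F : Set G} (hF : F.Finite) :
    ∃ R > 0, A * F ⊆ nbhd S R A := by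
  obtain ⟨M, hM⟩ := (hF.image fun f => (wordLength S f : ℝ)).bddAbove
  refine ⟨max M 1, by positivity, ?_⟩
  rintro _ ⟨a, ha, f, hf, rfl⟩
  exact mem_nbhd_iff.2 ⟨f, (hM ⟨f, hf, rfl⟩).trans (le_max_left _ _), by simpa using ha⟩

lemma mul_inv_mem_conj {g s x y : G} {P : Subgroup G} (hx : x * s⁻¹ ∈ g • (P : Set G))
    (hy : y * s⁻¹ ∈ g • (P : Set G)) : x * y⁻¹ ∈ conj g P := by
  obtain ⟨p, hp, hpx⟩ := hx
  obtain ⟨q, hq, hqy⟩ := hy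
  refine ⟨p * q⁻¹, mul_mem hp (inv_mem hq), ?_⟩
  rw [eq_mul_inv_iff_mul_eq] at hpx hqy
  simp only [smul_eq_mul] at hpx hqy
  rw [← hpx, ← hqy]
  simp [mul_assoc]

lemma exists_subset_mul_singleton {H : Subgroup G} {Y : Set G}
    (hY : ∀ x ∈ Y, ∀ y ∈ Y, x * y⁻¹ ∈ H) : ∃ z, Y ⊆ (H : Set G) * {z} := by
  obtain rfl | ⟨z, hz⟩ := Y.eq_empty_or_nonempty
  · exact ⟨1, Set.empty_subset _⟩
  · exact ⟨z, fun x hx => ⟨x * z⁻¹, hY x hx z hz, z, rfl, inv_mul_cancel_right x z⟩⟩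

lemma exists_finite_biUnion_subset_mul {ι : Type*} {H : Set G} {Φ : Set ι} (hΦ : Φ.Finite)
    {Y : ι → Set G} (hY : ∀ φ, ∃ z, Y φ ⊆ H * {z}) :
    ∃ F : Set G, F.Finite ∧ ⋃ φ ∈ Φ, Y φ ⊆ H * F := by
  choose z hz using hY
  refine ⟨z '' Φ, hΦ.image z, Set.iUnion₂_subset fun φ hφ => (hz φ).trans ?_⟩
  exact Set.mul_subset_mul_left (Set.singleton_subset_iff.2 (Set.mem_image_of_mem z hφ))

theorem statement8_general (S : Finset G) (hS : Subgroup.closure (S : Set G) = ⊤)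
    (k : ℕ) (g : Fin k → G) (P : Fin k → Subgroup G) (r : ℝ) :
    ∃ R : ℝ, 0 < R ∧
      (⋂ i, nbhd (S : Set G) r (g i • (P i : Set G))) ⊆
        nbhd (S : Set G) R ((⨅ i, conj (g i) (P i) : Subgroup G) : Set G) := by
  set H := ⨅ i, conj (g i) (P i)
  let Y : (Fin k → G) → Set G := fun s => ⋂ i, {x | x * (s i)⁻¹ ∈ g i • (P i : Set G)}
  have hY : ∀ s, ∃ z, Y s ⊆ (H : Set G) * {z} := fun s =>
    exists_subset_mul_singleton fun x hx y hy => Subgroup.mem_iInf.2 fun i =>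
      mul_inv_mem_conj (Set.mem_iInter.1 hx i) (Set.mem_iInter.1 hy i)
  have hΦ : (Set.univ.pi fun _ : Fin k => {s | (wordLength (S : Set G) s : ℝ) ≤ r}).Finite :=
    Set.Finite.pi fun _ => finite_setOf_wordLength_le_s8 hS r
  obtain ⟨F, hF, hYF⟩ := exists_finite_biUnion_subset_mul hΦ hY
  obtain ⟨R, hR, hFR⟩ := exists_mul_subset_nbhd (S : Set G) H hF
  refine ⟨R, hR, fun x hx => hFR (hYF ?_)⟩
  choose s hs hxs using fun i => mem_nbhd_iff.1 (Set.mem_iInter.1 hx i)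
  exact Set.mem_biUnion (x := s) (fun i _ => hs i) (Set.mem_iInter.2 hxs)

/-- The fundamental lemma: for left cosets `g₁P₁, …, g_kP_k` of subgroups of `G` and any
`r > 0` there is `R > 0` such that
`⋂ᵢ N_r(gᵢPᵢ) ⊆ N_R(⋂ᵢ gᵢPᵢgᵢ⁻¹)`. -/
theorem statement8 (S : Finset G) (hS : Subgroup.closure (S : Set G) = ⊤)
    (k : ℕ) (g : Fin k → G) (P : Fin k → Subgroup G) (r : ℝ) (hr : 0 < r) :
    ∃ R : ℝ, 0 < R ∧
      (⋂ i, nbhd (S : Set G) r (g i • (P i : Set G))) ⊆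
        nbhd (S : Set G) R ((⨅ i, conj (g i) (P i) : Subgroup G) : Set G) :=
  statement8_general S hS k g P r

end CIC
end
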